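/- arXiv:2006.10252 — 2 statements merged into one kernel-verified Lean document; each statement's English description precedes it below -/
import Mathlib

section
/- If X₁ is a finite nonempty multiset of elements of a type with a function f into the reals, and X₂ is obtained from X₁ by replicating every element exactly c times (c ≥ 1), then the mean aggregator coincides on X₁ and X₂: (Σ_{x∈X₁} f(x))/|X₁| = (Σ_{x∈X₂} f(x))/|X₂|. In particular the mean aggregator cannot distinguish a multiset from its c-fold replication. -/
/-- The mean aggregator cannot distinguish a nonempty multiset from its `c`-fold
replication: means of `f` over `X₁` and `X₂ = c • X₁` coincide. -/
theorem stmt_7 {α : Type*} (X₁ : Multiset α) (h₁ : X₁ ≠ 0) (f : α → ℝ)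
    (c : ℕ) (hc : 1 ≤ c) (X₂ : Multiset α) (hX₂ : X₂ = c • X₁) :
    (X₁.map f).sum / (Multiset.card X₁ : ℝ) =
      (X₂.map f).sum / (Multiset.card X₂ : ℝ) := by
  subst hX₂
  rw [Multiset.map_nsmul, Multiset.sum_nsmul, Multiset.card_nsmul]
  have hcard : (Multiset.card X₁ : ℝ) ≠ 0 := by
    simpa using Multiset.card_pos.mpr h₁ |>.ne'
  have hc0 : (c : ℝ) ≠ 0 := by positivity
  push_cast
  field_simp
  ring
end

section
/- Let X₁ and X₂ be nonempty finite multisets over a type α and f : α → ℝ. If there is a constant c > 0 with count of every element in X₂ equal to c times its count in X₁, then both the mean aggregator and the max aggregator agree on X₁ and X₂, while the sum aggregator distinguishes them whenever Σ_{x∈X₁} f(x) ≠ 0 and c ≠ 1. -/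
lemma sup_nsmul_aux {β : Type*} [SemilatticeSup β] [OrderBot β] (s : Multiset β) :
    ∀ n : ℕ, 0 < n → ((n : ℕ) • s).sup = s.sup := by
  intro n hn
  induction n with
  | zero => omega
  | succ k ih =>
    rcases Nat.eq_zero_or_pos k with hk | hk
    · simp [hk]
    · rw [succ_nsmul, Multiset.sup_add, ih hk, sup_idem]

/-- If `X₂ = c • X₁` with `c > 0`, the mean and max aggregators agree on `X₁` and `X₂`,
while the sum aggregator distinguishes them whenever the sum is nonzero and `c ≠ 1`. -/
theorem stmt_16 {α : Type*} (X₁ : Multiset α) (h₁ : X₁ ≠ 0) (f : α → ℝ)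
    (c : ℕ) (hc : 0 < c) (X₂ : Multiset α) (hX₂ : X₂ = c • X₁) :
    ((X₁.map f).sum / (Multiset.card X₁ : ℝ) =
        (X₂.map f).sum / (Multiset.card X₂ : ℝ)) ∧
      (((X₁.map f).map (fun b => (b : WithBot ℝ))).sup =
        ((X₂.map f).map (fun b => (b : WithBot ℝ))).sup) ∧
      ((X₁.map f).sum ≠ 0 → c ≠ 1 → (X₂.map f).sum ≠ (X₁.map f).sum) := by
  subst hX₂
  have hmap : (c • X₁).map f = c • (X₁.map f) := Multiset.map_nsmul f c X₁
  have hsum : ((c • X₁).map f).sum = (c : ℝ) * (X₁.map f).sum := by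
    rw [hmap, Multiset.sum_nsmul, nsmul_eq_mul]
  have hcard : (Multiset.card (c • X₁) : ℝ) = (c : ℝ) * Multiset.card X₁ := by
    simp [Multiset.card_nsmul]
  refine ⟨?_, ?_, ?_⟩
  · rw [hsum, hcard, mul_div_mul_left]
    exact Nat.cast_ne_zero.mpr hc.ne'
  · have h2 : ((c • X₁).map f).map (fun b => (b : WithBot ℝ)) =
        c • ((X₁.map f).map (fun b => (b : WithBot ℝ))) := by
      simp [hmap, Multiset.map_nsmul, Multiset.map_map]
    rw [h2, sup_nsmul_aux _ c hc]
  · intro hne hc1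
    rw [hsum]
    intro h
    nth_rewrite 2 [← one_mul ((X₁.map f).sum)] at h
    have : (c : ℝ) = 1 := mul_right_cancel₀ hne h
    exact hc1 (by exact_mod_cast this)
end
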